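/- arXiv:2006.03803 — 3 statements merged into one kernel-verified Lean document; each statement's English description precedes it below -/
import Mathlib

section
/- Suppose F : [0,T*) → ℝ is differentiable, satisfies dF/dt ≥ (1/2)F(t)² - √2·A for a constant A ≥ 0, and F(0) ≥ 4√A with F(0) > 0. Then F(t) ≥ F(0)/(1 - (F(0)/4)t) for all t in the domain where the right-hand side is defined; in particular F blows up no later than time 4/F(0), so T* ≤ 4/F(0). -/
open Set

/-- ODE blow-up argument for the Burgers–Hilbert functional: if
`F' ≥ (1/2) F² - √2 A` with `F 0 ≥ 4 √A > 0`, then `F t ≥ F 0 / (1 - (F 0 / 4) t)` wherever the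
right-hand side is defined, and the lifespan satisfies `T* ≤ 4 / F 0`. -/
theorem ode_blowup_burgers_hilbert
    (Tstar A : ℝ) (F F' : ℝ → ℝ)
    (hT : 0 < Tstar)
    (hA : 0 ≤ A)
    (hderiv : ∀ t, 0 ≤ t → t < Tstar → HasDerivAt F (F' t) t)
    (hineq : ∀ t, 0 ≤ t → t < Tstar → F' t ≥ (1/2) * (F t)^2 - Real.sqrt 2 * A)
    (hF0 : F 0 ≥ 4 * Real.sqrt A) (hF0pos : 0 < F 0) :
    (∀ t, 0 ≤ t → t < Tstar → 0 < 1 - (F 0 / 4) * t →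
      F t ≥ F 0 / (1 - (F 0 / 4) * t)) ∧ Tstar ≤ 4 / F 0 := by
  have hsqA : Real.sqrt A ^ 2 = A := Real.sq_sqrt hA
  have hsqA0 : 0 ≤ Real.sqrt A := Real.sqrt_nonneg A
  have hsqrt2 : Real.sqrt 2 ≤ 2 := by
    nlinarith [Real.sq_sqrt (by norm_num : (0:ℝ) ≤ 2), Real.sqrt_nonneg 2]
  -- Step 1: invariance, F t ≥ F 0 on [0, Tstar)
  have key : ∀ t, 0 ≤ t → t < Tstar → F 0 ≤ F t := by
    intro t ht htT
    by_contra hcon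
    push_neg at hcon
    set b : ℝ := max (F t) (3 * Real.sqrt A) with hb
    have hbF0 : b < F 0 := by
      apply max_lt hcon
      rcases eq_or_lt_of_le hsqA0 with h | h
      · rw [← h]; simpa using hF0pos
      · nlinarith
    have hb3 : 3 * Real.sqrt A ≤ b := le_max_right _ _
    set S : Set ℝ := {s | s ∈ Icc (0:ℝ) t ∧ F s ≤ b} with hS
    have hSne : S.Nonempty := ⟨t, ⟨ht, le_rfl⟩, le_max_left _ _⟩
    have hSbdd : BddBelow S := ⟨0, fun s hs => hs.1.1⟩
    have hScl : IsClosed S := by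
      have hc : ContinuousOn F (Icc 0 t) := fun s hs =>
        ((hderiv s hs.1 (lt_of_le_of_lt hs.2 htT)).continuousAt).continuousWithinAt
      have : S = Icc 0 t ∩ F ⁻¹' (Iic b) := by aesop
      rw [this]
      exact hc.preimage_isClosed_of_isClosed isClosed_Icc isClosed_Iic
    set s0 : ℝ := sInf S with hs0
    have hs0mem : s0 ∈ S := hScl.csInf_mem hSne hSbdd
    have hs0t : s0 ≤ t := hs0mem.1.2
    have hs0nn : 0 ≤ s0 := hs0mem.1.1
    have hs0T : s0 < Tstar := lt_of_le_of_lt hs0t htT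
    have hs0pos : 0 < s0 := by
      rcases eq_or_lt_of_le hs0nn with h | h
      · exfalso; have := hs0mem.2; rw [← h] at this; linarith
      · exact h
    -- F is monotone on [0, s0]
    have hmono : MonotoneOn F (Icc 0 s0) := by
      apply monotoneOn_of_deriv_nonneg (convex_Icc 0 s0)
      · exact fun s hs =>
          ((hderiv s hs.1 (lt_of_le_of_lt (hs.2.trans hs0t) htT)).continuousAt).continuousWithinAt
      · intro s hs
        rw [interior_Icc] at hs
        exact ((hderiv s hs.1.le (lt_of_lt_of_le hs.2 hs0T.le)).differentiableAt).differentiableWithinAt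
      · intro s hs
        rw [interior_Icc] at hs
        have hsT : s < Tstar := lt_trans hs.2 hs0T
        rw [(hderiv s hs.1.le hsT).deriv]
        have hFsb : b < F s := by
          by_contra hle
          push_neg at hle
          have : s ∈ S := ⟨⟨hs.1.le, hs.2.le.trans hs0t⟩, hle⟩
          exact absurd (csInf_le hSbdd this) (not_le.mpr hs.2)
        have hbnn : 0 ≤ b := le_trans (by positivity) hb3
        have hsq : b ^ 2 ≤ (F s) ^ 2 := by nlinarith
        have hb2 : 9 * A ≤ b ^ 2 := by nlinarith
        have := hineq s hs.1.le hsT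
        nlinarith
    have := hmono ⟨le_rfl, hs0nn⟩ ⟨hs0nn, le_rfl⟩ hs0nn
    linarith [hs0mem.2]
  have hFpos : ∀ t, 0 ≤ t → t < Tstar → 0 < F t := fun t ht htT =>
    lt_of_lt_of_le hF0pos (key t ht htT)
  -- Step 2: g := fun s => (F s)⁻¹ + s/4 is antitone on [0, t] for t < Tstar
  have ginA : ∀ t, 0 ≤ t → t < Tstar → (F t)⁻¹ + t / 4 ≤ (F 0)⁻¹ := by
    intro t ht htT
    set g : ℝ → ℝ := fun s => (F s)⁻¹ + s / 4 with hg
    have hanti : AntitoneOn g (Icc 0 t) := by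
      have hgderiv : ∀ s ∈ Icc (0:ℝ) t,
          HasDerivAt g (-F' s / (F s) ^ 2 + 1/4) s := by
        intro s hs
        have hsT : s < Tstar := lt_of_le_of_lt hs.2 htT
        have hne : F s ≠ 0 := (hFpos s hs.1 hsT).ne'
        have h1 : HasDerivAt (fun x => (F x)⁻¹) (-F' s / (F s) ^ 2) s :=
          (hderiv s hs.1 hsT).inv hne
        have h2 : HasDerivAt (fun x : ℝ => x / 4) (1/4 : ℝ) s := by
          simpa using (hasDerivAt_id s).div_const 4
        exact h1.add h2
      apply antitoneOn_of_deriv_nonpos (convex_Icc 0 t)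
      · exact fun s hs => ((hgderiv s hs).continuousAt).continuousWithinAt
      · intro s hs
        rw [interior_Icc] at hs
        exact ((hgderiv s ⟨hs.1.le, hs.2.le⟩).differentiableAt).differentiableWithinAt
      · intro s hs
        rw [interior_Icc] at hs
        have hs' : s ∈ Icc (0:ℝ) t := ⟨hs.1.le, hs.2.le⟩
        rw [(hgderiv s hs').deriv]
        have hsT : s < Tstar := lt_of_le_of_lt hs'.2 htT
        have hFs : 0 < F s := hFpos s hs'.1 hsT
        have hFs0 : F 0 ≤ F s := key s hs'.1 hsT
        -- F' s ≥ (1/4) (F s)^2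
        have h1 : (1/4 : ℝ) * (F s) ^ 2 ≤ F' s := by
          have := hineq s hs'.1 hsT
          have hsqF : 16 * A ≤ (F s) ^ 2 := by nlinarith
          nlinarith
        have hsq : (0:ℝ) < (F s) ^ 2 := by positivity
        have : (1/4 : ℝ) ≤ F' s / (F s) ^ 2 := (le_div_iff₀ hsq).mpr (by linarith)
        have hdd : -F' s / (F s) ^ 2 = -(F' s / (F s) ^ 2) := by ring
        rw [hdd]
        linarith
    have := hanti ⟨le_rfl, ht⟩ ⟨ht, le_rfl⟩ ht
    simpa [hg] using this
  constructor
  · intro t ht htT hpos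
    have hFt : 0 < F t := hFpos t ht htT
    have h1 : (F t)⁻¹ ≤ (F 0)⁻¹ - t / 4 := by linarith [ginA t ht htT]
    rw [ge_iff_le, div_le_iff₀ hpos]
    have e1 : F t * (F t)⁻¹ = 1 := mul_inv_cancel₀ hFt.ne'
    have e2 : F 0 * (F 0)⁻¹ = 1 := mul_inv_cancel₀ hF0pos.ne'
    have h2 : F t * (F t)⁻¹ ≤ F t * ((F 0)⁻¹ - t / 4) :=
      mul_le_mul_of_nonneg_left h1 hFt.le
    rw [e1] at h2
    have h3 : F 0 * 1 ≤ F 0 * (F t * ((F 0)⁻¹ - t / 4)) :=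
      mul_le_mul_of_nonneg_left h2 hF0pos.le
    calc F 0 = F 0 * 1 := by ring
      _ ≤ F 0 * (F t * ((F 0)⁻¹ - t / 4)) := h3
      _ = F t * (F 0 * (F 0)⁻¹) - F 0 * F t * t / 4 := by ring
      _ = F t * (1 - F 0 / 4 * t) := by rw [e2]; ring
  · by_contra hcon
    push_neg at hcon
    set t : ℝ := 4 / F 0 with htdef
    have ht0 : 0 ≤ t := by positivity
    have htT : t < Tstar := hcon
    have h1 : (F t)⁻¹ + t / 4 ≤ (F 0)⁻¹ := ginA t ht0 htT
    have h2 : t / 4 = (F 0)⁻¹ := by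
      rw [htdef]; field_simp
    have h3 : (F t)⁻¹ ≤ 0 := by linarith [h1, h2.symm.le, h2.le]
    have : 0 < (F t)⁻¹ := inv_pos.mpr (hFpos t ht0 htT)
    linarith
end

section
/- Let m(0) < 0, 0 < δ < 1/2, and let q : [0,T₁] → (0,1] and r : [0,T₁] → ℝ satisfy q(t) ≤ r(t) ≤ (1-δ)⁻¹ q(t) and (1+δ)m(0) ≤ dr/dt ≤ (1-δ)m(0) for all t ∈ [0,T₁], with r differentiable. Then for all s > 0 with s ≠ 1 and all t ∈ [0,T₁], ∫₀ᵗ q(τ)^{-s} dτ ≤ -(1-δ)^{-(s+1)} (1-s)^{-1} m(0)^{-1} [(1-δ)^{s-1} - q(t)^{1-s}]. -/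
/-!
With `φ x = x ^ (1 - s) / (1 - s)`, a primitive of `x ^ (-s)` that is increasing on `(0, ∞)` for
every `s ≠ 1`, the substitution `dτ = (dr/dτ)⁻¹ dr` becomes the pointwise bound
`q ^ (-s) ≤ (1 - δ) ^ (-(s + 1)) m₀⁻¹ · (φ ∘ r)'`, which follows from `q ≥ (1 - δ) r` and
`r' ≤ (1 - δ) m₀ < 0`. Integrating it gives `(1 - δ) ^ (-(s + 1)) m₀⁻¹ (φ (r t) - φ (r 0))`, and
since `m₀ < 0`, monotonicity of `φ` together with `q t ≤ r t` and `r 0 ≤ (1 - δ)⁻¹` replaces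
`r t` by `q t` and `r 0` by `(1 - δ)⁻¹`.
-/

open Set intervalIntegral

theorem hasDerivAt_rpow_one_sub_div {s x : ℝ} (hs : s ≠ 1) (hx : x ≠ 0) :
    HasDerivAt (fun x => x ^ (1 - s) / (1 - s)) (x ^ (-s)) x := by
  have hs' : 1 - s ≠ 0 := sub_ne_zero.2 hs.symm
  have h := (Real.hasDerivAt_rpow_const (p := 1 - s) (Or.inl hx)).div_const (1 - s)
  rwa [show 1 - s - 1 = -s by ring, mul_div_cancel_left₀ _ hs'] at h

theorem strictMonoOn_rpow_one_sub_div {s : ℝ} (hs : s ≠ 1) :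
    StrictMonoOn (fun x : ℝ => x ^ (1 - s) / (1 - s)) (Ioi 0) := by
  have hderiv : ∀ x ∈ Ioi (0 : ℝ), HasDerivAt (fun x => x ^ (1 - s) / (1 - s)) (x ^ (-s)) x :=
    fun x hx => hasDerivAt_rpow_one_sub_div hs (ne_of_gt hx)
  refine strictMonoOn_of_hasDerivWithinAt_pos (f' := fun x => x ^ (-s)) (convex_Ioi 0)
    (fun x hx => (hderiv x hx).continuousAt.continuousWithinAt) (fun x hx => ?_) (fun x hx => ?_)
  · exact (hderiv x (interior_subset hx)).hasDerivWithinAt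
  · exact Real.rpow_pos_of_pos (interior_subset hx : (0 : ℝ) < x) _

theorem integral_le_mul_sub_of_le_mul_rpow_mul_deriv {a b c s : ℝ} {g r r' : ℝ → ℝ}
    (hab : a ≤ b) (hs : s ≠ 1) (hr : ∀ x ∈ Icc a b, 0 < r x)
    (hderiv : ∀ x ∈ Icc a b, HasDerivAt r (r' x) x) (hg : IntervalIntegrable g MeasureTheory.volume a b)
    (hle : ∀ x ∈ Ioo a b, g x ≤ c * (r x ^ (-s) * r' x)) :
    ∫ x in a..b, g x ≤ c * (r b ^ (1 - s) / (1 - s) - r a ^ (1 - s) / (1 - s)) := by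
  have hG : ∀ x ∈ Icc a b, HasDerivAt (fun x => c * (r x ^ (1 - s) / (1 - s)))
      (c * (r x ^ (-s) * r' x)) x := fun x hx =>
    ((hasDerivAt_rpow_one_sub_div hs (hr x hx).ne').comp x (hderiv x hx)).const_mul c
  rw [mul_sub]
  exact integral_le_sub_of_hasDeriv_right_of_le hab
    (fun x hx => (hG x hx).continuousAt.continuousWithinAt)
    (fun x hx => (hG x (Ioo_subset_Icc_self hx)).hasDerivWithinAt)
    ((intervalIntegrable_iff_integrableOn_Icc_of_le hab).1 hg) hle

theorem rpow_neg_le_mul_rpow_neg_mul {k m q r r' s : ℝ} (hk : 0 < k) (hm : m < 0) (hs : 0 ≤ s)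
    (hr : 0 < r) (hrq : r ≤ k⁻¹ * q) (hr' : r' ≤ k * m) :
    q ^ (-s) ≤ k ^ (-(s + 1)) * m⁻¹ * (r ^ (-s) * r') := by
  have hkr : k * r ≤ q := by rwa [le_inv_mul_iff₀ hk] at hrq
  have hpow : q ^ (-s) ≤ k ^ (-s) * r ^ (-s) := by
    rw [← Real.mul_rpow hk.le hr.le]
    exact Real.rpow_le_rpow_of_nonpos (mul_pos hk hr) hkr (neg_nonpos.2 hs)
  have hslope : 1 ≤ r' / (k * m) := by
    rwa [le_div_iff_of_neg (mul_neg_of_pos_of_neg hk hm), one_mul]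
  have hk' : k ^ (-(s + 1)) = k ^ (-s) * k⁻¹ := by
    rw [neg_add, Real.rpow_add hk, Real.rpow_neg_one]
  calc q ^ (-s) ≤ k ^ (-s) * r ^ (-s) * 1 := by rwa [mul_one]
    _ ≤ k ^ (-s) * r ^ (-s) * (r' / (k * m)) := by gcongr
    _ = k ^ (-(s + 1)) * m⁻¹ * (r ^ (-s) * r') := by rw [hk']; field_simp

theorem q_power_integral_bound_general
    (δ m0 T₁ : ℝ) (q r r' : ℝ → ℝ)
    (hm0 : m0 < 0) (hδ : 0 < δ) (hδ' : δ < 1/2)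
    (hq : ∀ t ∈ Icc 0 T₁, 0 < q t ∧ q t ≤ 1)
    (hqr : ∀ t ∈ Icc 0 T₁, q t ≤ r t ∧ r t ≤ (1 - δ)⁻¹ * q t)
    (hderiv : ∀ t ∈ Icc 0 T₁, HasDerivAt r (r' t) t)
    (hup : ∀ t ∈ Icc 0 T₁, r' t ≤ (1 - δ) * m0) :
    ∀ s : ℝ, 0 < s → s ≠ 1 → ∀ t ∈ Icc 0 T₁,
      ∫ τ in (0:ℝ)..t, (q τ) ^ (-s) ≤
        -((1 - δ) ^ (-(s + 1)) * (1 - s)⁻¹ * m0⁻¹ *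
          ((1 - δ) ^ (s - 1) - (q t) ^ (1 - s))) := by
  intro s hs hs1 t ht
  have hk : 0 < 1 - δ := by linarith
  have h0 : (0 : ℝ) ∈ Icc 0 T₁ := ⟨le_rfl, ht.1.trans ht.2⟩
  have hsub : Icc 0 t ⊆ Icc 0 T₁ := Icc_subset_Icc_right ht.2
  have hrpos : ∀ x ∈ Icc 0 T₁, 0 < r x := fun x hx => (hq x hx).1.trans_le (hqr x hx).1
  have hc : (1 - δ) ^ (-(s + 1)) * m0⁻¹ < 0 :=
    mul_neg_of_pos_of_neg (Real.rpow_pos_of_pos hk _) (inv_lt_zero.2 hm0)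
  have hφ := strictMonoOn_rpow_one_sub_div hs1
  have hqt : q t ≤ (1 - δ)⁻¹ := (hq t ht).2.trans (one_le_inv₀ hk |>.2 (by linarith))
  have hr0 : r 0 ≤ (1 - δ)⁻¹ :=
    (hqr 0 h0).2.trans (mul_le_of_le_one_right (inv_pos.2 hk).le (hq 0 h0).2)
  have hrhs : -((1 - δ) ^ (-(s + 1)) * (1 - s)⁻¹ * m0⁻¹ *
        ((1 - δ) ^ (s - 1) - (q t) ^ (1 - s))) = (1 - δ) ^ (-(s + 1)) * m0⁻¹ *
        (q t ^ (1 - s) / (1 - s) - (1 - δ)⁻¹ ^ (1 - s) / (1 - s)) := by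
    rw [Real.inv_rpow hk.le, ← Real.rpow_neg hk.le, neg_sub]
    ring
  rw [hrhs]
  by_cases hint : IntervalIntegrable (fun τ => q τ ^ (-s)) MeasureTheory.volume 0 t
  · calc ∫ τ in (0:ℝ)..t, q τ ^ (-s)
        ≤ (1 - δ) ^ (-(s + 1)) * m0⁻¹ * (r t ^ (1 - s) / (1 - s) - r 0 ^ (1 - s) / (1 - s)) :=
          integral_le_mul_sub_of_le_mul_rpow_mul_deriv ht.1 hs1 (fun x hx => hrpos x (hsub hx))
            (fun x hx => hderiv x (hsub hx)) hint fun x hx =>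
              have hx' := hsub (Ioo_subset_Icc_self hx)
              rpow_neg_le_mul_rpow_neg_mul hk hm0 hs.le (hrpos x hx') (hqr x hx').2 (hup x hx')
      _ ≤ _ := by
          refine mul_le_mul_of_nonpos_left (sub_le_sub ?_ ?_) hc.le
          · exact hφ.monotoneOn (hq t ht).1 (hrpos t ht) (hqr t ht).1
          · exact hφ.monotoneOn (hrpos 0 h0) (inv_pos.2 hk) hr0
  · -- the integral is `0` by convention, and the bound is nonnegative
    rw [integral_undef hint]
    exact mul_nonneg_of_nonpos_of_nonpos hc.le
      (sub_nonpos.2 (hφ.monotoneOn (hq t ht).1 (inv_pos.2 hk) hqt))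

/-- Lemma A.3 (case `ε = 1`, `s ≠ 1`): integral bound for negative powers of `q`. -/
theorem q_power_integral_bound
    (δ m0 T₁ : ℝ) (q r r' : ℝ → ℝ)
    (hm0 : m0 < 0) (hδ : 0 < δ) (hδ' : δ < 1/2) (hT : 0 < T₁)
    (hq : ∀ t ∈ Icc 0 T₁, 0 < q t ∧ q t ≤ 1)
    (hqr : ∀ t ∈ Icc 0 T₁, q t ≤ r t ∧ r t ≤ (1 - δ)⁻¹ * q t)
    (hderiv : ∀ t ∈ Icc 0 T₁, HasDerivAt r (r' t) t)
    (hlow : ∀ t ∈ Icc 0 T₁, (1 + δ) * m0 ≤ r' t)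
    (hup : ∀ t ∈ Icc 0 T₁, r' t ≤ (1 - δ) * m0) :
    ∀ s : ℝ, 0 < s → s ≠ 1 → ∀ t ∈ Icc 0 T₁,
      ∫ τ in (0:ℝ)..t, (q τ) ^ (-s) ≤
        -((1 - δ) ^ (-(s + 1)) * (1 - s)⁻¹ * m0⁻¹ *
          ((1 - δ) ^ (s - 1) - (q t) ^ (1 - s))) :=
  q_power_integral_bound_general δ m0 T₁ q r r' hm0 hδ hδ' hq hqr hderiv hup
end

section
/- Let m(0) < 0, 0 < δ < 1/2, and let q : [0,T₁] → (0,1] and r : [0,T₁] → ℝ be as above (q ≤ r ≤ (1-δ)⁻¹q and (1+δ)m(0) ≤ r' ≤ (1-δ)m(0)). Then ∫₀ᵗ q(τ)^{-1} dτ ≤ -(1-δ)^{-2} m(0)^{-1} [-log(1-δ) - log q(t)] for all t ∈ [0,T₁]. -/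
open Set intervalIntegral

/-- Lemma A.3, logarithmic case `s = 1`: `∫₀ᵗ q⁻¹ ≤ -(1-δ)⁻² m(0)⁻¹ [-log(1-δ) - log q(t)]`. -/
theorem q_log_integral_bound
    (δ m0 T₁ : ℝ) (q r r' : ℝ → ℝ)
    (hm0 : m0 < 0) (hδ : 0 < δ) (hδ' : δ < 1/2) (hT : 0 < T₁)
    (hq : ∀ t ∈ Icc 0 T₁, 0 < q t ∧ q t ≤ 1)
    (hqr : ∀ t ∈ Icc 0 T₁, q t ≤ r t ∧ r t ≤ (1 - δ)⁻¹ * q t)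
    (hderiv : ∀ t ∈ Icc 0 T₁, HasDerivAt r (r' t) t)
    (hlow : ∀ t ∈ Icc 0 T₁, (1 + δ) * m0 ≤ r' t)
    (hup : ∀ t ∈ Icc 0 T₁, r' t ≤ (1 - δ) * m0) :
    ∀ t ∈ Icc 0 T₁,
      ∫ τ in (0:ℝ)..t, (q τ)⁻¹ ≤
        -((1 - δ)⁻¹ ^ 2 * m0⁻¹ * (-Real.log (1 - δ) - Real.log (q t))) := by
  intro t ht
  have hδ1 : (0:ℝ) < 1 - δ := by linarith
  set C : ℝ := (1 - δ)⁻¹ ^ 2 * m0⁻¹ with hC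
  have hCneg : C < 0 := by
    apply mul_neg_of_pos_of_neg
    · positivity
    · exact inv_lt_zero.mpr hm0
  have hrpos : ∀ x ∈ Icc 0 T₁, 0 < r x := fun x hx =>
    lt_of_lt_of_le (hq x hx).1 (hqr x hx).1
  -- RHS rewritten
  have hRHS : -(C * (-Real.log (1 - δ) - Real.log (q t))) =
      C * (Real.log (1 - δ) + Real.log (q t)) := by ring
  rw [hRHS]
  have hRHSpos : 0 ≤ C * (Real.log (1 - δ) + Real.log (q t)) := by
    have h1 : Real.log (1 - δ) < 0 := Real.log_neg hδ1 (by linarith)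
    have h2 : Real.log (q t) ≤ 0 := Real.log_nonpos (hq t ht).1.le (hq t ht).2
    nlinarith
  by_cases hint : IntervalIntegrable (fun τ => (q τ)⁻¹) MeasureTheory.volume 0 t
  · -- main case
    have hsub : Icc 0 t ⊆ Icc 0 T₁ := Icc_subset_Icc le_rfl ht.2
    have ht0 : (0:ℝ) ≤ t := ht.1
    set g : ℝ → ℝ := fun x => C * Real.log (r x) with hg
    have hgd : ∀ x ∈ Icc 0 t, HasDerivAt g (C * (r' x / r x)) x := by
      intro x hx
      exact ((hderiv x (hsub hx)).log (hrpos x (hsub hx)).ne').const_mul C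
    have hcont : ContinuousOn g (Icc 0 t) := fun x hx =>
      (hgd x hx).continuousAt.continuousWithinAt
    have hφint : MeasureTheory.IntegrableOn (fun τ => (q τ)⁻¹) (Icc 0 t) := by
      exact (intervalIntegrable_iff_integrableOn_Icc_of_le ht0).mp hint
    have key : (∫ τ in (0:ℝ)..t, (q τ)⁻¹) ≤ g t - g 0 := by
      apply integral_le_sub_of_hasDeriv_right_of_le ht0 hcont
        (fun x hx => (hgd x (Ioo_subset_Icc_self hx)).hasDerivWithinAt) hφint
      intro x hx
      have hx' : x ∈ Icc 0 T₁ := hsub (Ioo_subset_Icc_self hx)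
      have hqx := (hq x hx').1
      have hrx := hrpos x hx'
      have h1 : (q x)⁻¹ ≤ (1 - δ)⁻¹ * (r x)⁻¹ := by
        have hle : (1 - δ) * r x ≤ q x := by
          have := (hqr x hx').2
          calc (1 - δ) * r x ≤ (1 - δ) * ((1 - δ)⁻¹ * q x) :=
                mul_le_mul_of_nonneg_left this hδ1.le
          _ = q x := by field_simp
        calc (q x)⁻¹ ≤ ((1 - δ) * r x)⁻¹ := by
              apply inv_anti₀ (by positivity) hle
        _ = (1 - δ)⁻¹ * (r x)⁻¹ := by rw [mul_inv]
      have h2 : (1 - δ)⁻¹ * (r x)⁻¹ ≤ C * (r' x / r x) := by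
        have hup' := hup x hx'
        have : C * (r' x / r x) = C * r' x * (r x)⁻¹ := by ring
        rw [this]
        apply mul_le_mul_of_nonneg_right _ (by positivity)
        have : C * ((1 - δ) * m0) = (1 - δ)⁻¹ := by
          calc C * ((1 - δ) * m0)
              = (1 - δ)⁻¹ * ((1 - δ)⁻¹ * (1 - δ)) * (m0⁻¹ * m0) := by rw [hC]; ring
          _ = (1 - δ)⁻¹ := by
              rw [inv_mul_cancel₀ hδ1.ne', inv_mul_cancel₀ hm0.ne]; ring
        nlinarith [mul_le_mul_of_nonpos_left hup' hCneg.le]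
      exact h1.trans h2
    refine key.trans ?_
    -- g t - g 0 ≤ C * (log (1-δ) + log (q t))
    have hlog1 : Real.log (q t) ≤ Real.log (r t) :=
      Real.log_le_log (hq t ht).1 (hqr t ht).1
    have h0T : (0:ℝ) ∈ Icc 0 T₁ := ⟨le_rfl, hT.le⟩
    have hlog2 : Real.log (r 0) ≤ -Real.log (1 - δ) := by
      have hr0 : r 0 ≤ (1 - δ)⁻¹ := by
        calc r 0 ≤ (1 - δ)⁻¹ * q 0 := (hqr 0 h0T).2
        _ ≤ (1 - δ)⁻¹ * 1 := by
            exact mul_le_mul_of_nonneg_left (hq 0 h0T).2 (by positivity)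
        _ = (1 - δ)⁻¹ := mul_one _
      calc Real.log (r 0) ≤ Real.log (1 - δ)⁻¹ :=
            Real.log_le_log (hrpos 0 h0T) hr0
      _ = -Real.log (1 - δ) := Real.log_inv _
    have : Real.log (1 - δ) + Real.log (q t) ≤ Real.log (r t) - Real.log (r 0) := by
      linarith
    have := mul_le_mul_of_nonpos_left this hCneg.le
    simp only [hg]
    linarith
  · rw [intervalIntegral.integral_undef hint]
    exact hRHSpos
end
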